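/- Multiplication in the log reverse-KL semiring is associative: ⟨a,b,c,d⟩ ⊗ (⟨f,g,h,i⟩ ⊗ ⟨j,k,l,m⟩) = (⟨a,b,c,d⟩ ⊗ ⟨f,g,h,i⟩) ⊗ ⟨j,k,l,m⟩ for all reals, where ⟨a,b,c,d⟩ ⊗ ⟨f,g,h,i⟩ = ⟨a+f, b+g, log(e^{b+h}+e^{c+g}), log(e^{b+i}+e^{d+g})⟩. -/
import Mathlib

/-- Log reverse-KL semiring multiplication on 4-tuples of reals. -/
noncomputable def klMul (x y : ℝ × ℝ × ℝ × ℝ) : ℝ × ℝ × ℝ × ℝ :=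
  (x.1 + y.1, x.2.1 + y.2.1,
   Real.log (Real.exp (x.2.1 + y.2.2.1) + Real.exp (x.2.2.1 + y.2.1)),
   Real.log (Real.exp (x.2.1 + y.2.2.2) + Real.exp (x.2.2.2 + y.2.1)))

/-- log reverse-KL semiring multiplication is associative. -/
theorem log_reverse_kl_mul_assoc (a b c d f g h i j k l m : ℝ) :
    klMul (a, b, c, d) (klMul (f, g, h, i) (j, k, l, m))
      = klMul (klMul (a, b, c, d) (f, g, h, i)) (j, k, l, m) := by
  have pos : ∀ x y : ℝ, 0 < Real.exp x + Real.exp y := fun x y =>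
    add_pos (Real.exp_pos x) (Real.exp_pos y)
  simp only [klMul, Prod.mk.injEq]
  refine ⟨by ring, by ring, ?_, ?_⟩ <;>
  · simp only [Real.exp_add]
    rw [Real.exp_log (by positivity), Real.exp_log (by positivity)]
    congr 1
    ring
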